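/- Let K = (G, M, I) be a formal context and R ⊆ G. For every R-mixed generator S of K and every T ⊆ S ∩ R, the set S \ T is an R-mixed generator of K. Moreover, if R = G \ m' for some m ∈ M and g ∈ R, then S \ R is an R-mixed generator of both K and L = op^{g,m}(K), and S \ R is an extent of K (hence the unique R-mixed generator of itself in K). -/
import Mathlib


/-- Derivation of a set of objects: the attributes shared by all of them. -/
def intentOf {G M : Type*} (I : G → M → Prop) (S : Set G) : Set M :=
  {n | ∀ g ∈ S, I g n}

/-- Derivation of a set of attributes: the objects having all of them. -/
def extentOf {G M : Type*} (I : G → M → Prop) (B : Set M) : Set G :=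
  {g | ∀ n ∈ B, I g n}

/-- Double derivation (closure) of a set of objects. -/
def cl {G M : Type*} (I : G → M → Prop) (S : Set G) : Set G :=
  extentOf I (intentOf I S)

/-- A set of objects is an extent if it is closed under double derivation. -/
def IsExtent {G M : Type*} (I : G → M → Prop) (S : Set G) : Prop :=
  cl I S = S

/-- The number of concepts of the context equals its number of extents. -/
noncomputable def numConcepts {G M : Type*} (I : G → M → Prop) : ℕ :=
  {S : Set G | IsExtent I S}.ncard

/-- The context op^{g,m}(K): fill the row of `g` except at `m`,
and fill the column of `m` except at `g`. -/
def opRel {G M : Type*} (I : G → M → Prop) (g : G) (m : M) : G → M → Prop :=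
  fun h n => I h n ∨ (h = g ∧ n ≠ m) ∨ (h ≠ g ∧ n = m)

/-- `S` is an `R`-mixed generator. -/
def MixGen {G M : Type*} (I : G → M → Prop) (R S : Set G) : Prop :=
  ∀ g : G, (g ∈ S ∩ R → cl I (S \ {g}) ≠ cl I S) ∧
    (g ∉ S ∪ R → cl I (S ∪ {g}) ≠ cl I S)

/-- `S` strongly avoids `h` (with respect to the attribute `m`):
`S' ∩ (hᶜ \ {m}) ≠ ∅`. -/
def StronglyAvoids {G M : Type*} (I : G → M → Prop) (m : M) (S : Set G) (h : G) : Prop :=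
  ∃ n, n ∈ intentOf I S ∧ ¬ I h n ∧ n ≠ m

/-- `χ(S)`: the set of objects of `R = G \ m'` strongly avoided by `S`. -/
def chi {G M : Type*} (I : G → M → Prop) (m : M) (S : Set G) : Set G :=
  {h | ¬ I h m ∧ StronglyAvoids I m S h}

section Aux

variable {G M : Type*} (I : G → M → Prop)

lemma subset_cl' (S : Set G) : S ⊆ cl I S := fun g hg n hn => hn g hg

lemma intent_anti' {S T : Set G} (h : S ⊆ T) : intentOf I T ⊆ intentOf I S :=
  fun n hn g hg => hn g (h hg)

lemma cl_mono' {S T : Set G} (h : S ⊆ T) : cl I S ⊆ cl I T :=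
  fun g hg n hn => hg n (intent_anti' I h hn)

lemma intent_cl' (S : Set G) : intentOf I (cl I S) = intentOf I S := by
  apply Set.Subset.antisymm
  · exact intent_anti' I (subset_cl' I S)
  · intro n hn g hg; exact hg n hn

lemma cl_subset_of_subset_cl' {S T : Set G} (h : S ⊆ cl I T) : cl I S ⊆ cl I T := by
  have h1 : cl I S ⊆ cl I (cl I T) := cl_mono' I h
  intro x hx
  have := h1 hx
  intro n hn
  exact this n (by rw [intent_cl']; exact hn)

lemma add_ne' {S : Set G} {h : G} (hh : h ∉ cl I S) : cl I (S ∪ {h}) ≠ cl I S := by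
  intro e
  exact hh (e ▸ subset_cl' I _ (Or.inr rfl))

lemma not_mem_cl_of_add_ne' {S : Set G} {h : G}
    (hne : cl I (S ∪ {h}) ≠ cl I S) : h ∉ cl I S := by
  intro hc
  apply hne
  apply Set.Subset.antisymm
  · apply cl_subset_of_subset_cl' I
    rintro x (hx | hx)
    · exact subset_cl' I _ hx
    · rwa [Set.mem_singleton_iff.mp hx]
  · exact cl_mono' I Set.subset_union_left

lemma not_mem_cl_of_remove_ne' {S : Set G} {h : G} (hhS : h ∈ S)
    (hne : cl I (S \ {h}) ≠ cl I S) : h ∉ cl I (S \ {h}) := by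
  intro hc
  apply hne
  apply Set.Subset.antisymm
  · exact cl_mono' I Set.diff_subset
  · apply cl_subset_of_subset_cl' I
    intro x hx
    by_cases hxh : x = h
    · rwa [hxh]
    · exact subset_cl' I _ ⟨hx, hxh⟩

end Aux

theorem statement8 {G M : Type*} (I : G → M → Prop) (R : Set G) (S : Set G)
    (hS : MixGen I R S) :
    (∀ T ⊆ S ∩ R, MixGen I R (S \ T)) ∧
    (∀ (m : M) (g : G), R = {h : G | ¬ I h m} → g ∈ R →
      MixGen I R (S \ R) ∧
      MixGen (opRel I g m) R (S \ R) ∧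
      IsExtent I (S \ R) ∧
      (∀ T : Set G, MixGen I R T → cl I T = S \ R → T = S \ R)) := by
  have part1 : ∀ T ⊆ S ∩ R, MixGen I R (S \ T) := by
    intro T hT h
    constructor
    · rintro ⟨hhS, hhR⟩
      have h1 : cl I (S \ {h}) ≠ cl I S := (hS h).1 ⟨hhS.1, hhR⟩
      have h2 : h ∉ cl I (S \ {h}) := not_mem_cl_of_remove_ne' I hhS.1 h1
      have h3 : h ∉ cl I ((S \ T) \ {h}) := fun hc =>
        h2 (cl_mono' I (Set.diff_subset_diff_left Set.diff_subset) hc)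
      intro e
      exact h3 (e ▸ subset_cl' I _ hhS)
    · intro hh
      have hnR : h ∉ R := fun hr => hh (Or.inr hr)
      have hnS : h ∉ S := fun hs =>
        hh (Or.inl ⟨hs, fun ht => hnR (hT ht).2⟩)
      have h1 : cl I (S ∪ {h}) ≠ cl I S := (hS h).2 (fun hc => hc.elim hnS hnR)
      have h2 : h ∉ cl I S := not_mem_cl_of_add_ne' I h1
      exact add_ne' I (fun hc => h2 (cl_mono' I Set.diff_subset hc))
  refine ⟨part1, ?_⟩
  intro m g hR hg
  have hMG : MixGen I R (S \ R) := by
    have := part1 (S ∩ R) (le_refl _)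
    rwa [Set.diff_self_inter] at this
  -- m is in the intent of S \ R
  have hmInt : m ∈ intentOf I (S \ R) := by
    intro x hx
    have : x ∉ {h : G | ¬ I h m} := hR ▸ hx.2
    exact not_not.mp this
  have hExt : IsExtent I (S \ R) := by
    apply Set.Subset.antisymm
    · intro h hc
      have hIm : I h m := hc m hmInt
      have hnR : h ∉ R := by rw [hR]; simpa using hIm
      by_cases hhS : h ∈ S
      · exact ⟨hhS, hnR⟩
      · exfalso
        have h1 : cl I (S ∪ {h}) ≠ cl I S := (hS h).2 (fun hx => hx.elim hhS hnR)
        have h2 : h ∉ cl I S := not_mem_cl_of_add_ne' I h1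
        exact h2 (cl_mono' I Set.diff_subset hc)
    · exact subset_cl' I _
  refine ⟨hMG, ?_, hExt, ?_⟩
  · -- MixGen for opRel
    intro h
    constructor
    · rintro ⟨h1, h2⟩
      exact absurd h2 h1.2
    · intro hh
      have hnSR : h ∉ S \ R := fun hx => hh (Or.inl hx)
      have hnR : h ∉ R := fun hx => hh (Or.inr hx)
      have hIm : I h m := by
        have : h ∉ {h : G | ¬ I h m} := hR ▸ hnR
        exact not_not.mp this
      have hhg : h ≠ g := fun e => hnR (e ▸ hg)
      apply add_ne'
      intro hc
      apply hnSR
      rw [← hExt]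
      intro n hn
      have hnL : n ∈ intentOf (opRel I g m) (S \ R) := fun x hx => Or.inl (hn x hx)
      rcases hc n hnL with h1 | ⟨he, _⟩ | ⟨_, hnm⟩
      · exact h1
      · exact absurd he hhg
      · exact hnm ▸ hIm
  · -- uniqueness
    intro T hT hclT
    apply Set.Subset.antisymm
    · exact hclT ▸ subset_cl' I T
    · intro x hx
      by_contra hxT
      have hnR : x ∉ R := hx.2
      have h1 : cl I (T ∪ {x}) ≠ cl I T := (hT x).2 (fun hc => hc.elim hxT hnR)
      have h2 : x ∉ cl I T := not_mem_cl_of_add_ne' I h1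
      rw [hclT] at h2
      exact h2 hx
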